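/- Let ε>0, u*>0 and Δ>0. Then there exists a unique h>0 such that tanh( (u*Δ/(2ε))·(1+h) ) = 1/(1+h), and this h satisfies h ≤ 2/(e^{u*Δ/ε} − 1). -/

import Mathlib

/-!
With `a = u*Δ/(2ε)`, the function `g h = tanh (a(1+h)) - 1/(1+h)` is strictly increasing on
`h > -1`. It is negative at `0` because `tanh < 1`, and positive at `h₀ = 2/(e^{2a} - 1)`
because `1/(1+h₀) = tanh a < tanh (a(1+h₀))`. The intermediate value theorem gives a zero in
`(0, h₀)`, and monotonicity makes it unique.
-/

open Real Set

namespace Real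

theorem strictMono_tanh : StrictMono tanh := fun x y hxy => by
  by_contra! h
  have := artanh_le_artanh (neg_one_lt_tanh y) (tanh_lt_one x) h
  rw [artanh_tanh, artanh_tanh] at this
  linarith

theorem continuous_tanh : Continuous tanh := by
  simp_rw [funext tanh_eq_sinh_div_cosh]
  exact continuous_sinh.div continuous_cosh fun x => (cosh_pos x).ne'

theorem tanh_eq_one_div_one_add {x : ℝ} (hx : x ≠ 0) :
    tanh x = 1 / (1 + 2 / (exp (2 * x) - 1)) := by
  have hE : exp (2 * x) - 1 ≠ 0 := sub_ne_zero.2 (by simpa using hx)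
  rw [two_mul, exp_add] at hE ⊢
  rw [tanh_eq, exp_neg, one_add_div hE, one_div_div]
  have hx' := exp_pos x
  rw [div_eq_div_iff (by positivity) (by nlinarith [mul_pos hx' hx'])]
  field_simp
  ring

end Real

theorem strictMonoOn_tanh_mul_one_add_sub_inv {a : ℝ} (ha : 0 ≤ a) :
    StrictMonoOn (fun h => tanh (a * (1 + h)) - 1 / (1 + h)) (Ioi (-1)) := by
  intro x hx y hy hxy
  have htanh : tanh (a * (1 + x)) ≤ tanh (a * (1 + y)) :=
    strictMono_tanh.monotone (by gcongr)
  have hinv : 1 / (1 + y) < 1 / (1 + x) :=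
    one_div_lt_one_div_of_lt (by linarith [mem_Ioi.1 hx]) (by linarith)
  simp only
  linarith

theorem exists_mem_Ioo_tanh_mul_one_add_eq_inv {a : ℝ} (ha : 0 < a) :
    ∃ h ∈ Ioo 0 (2 / (exp (2 * a) - 1)), tanh (a * (1 + h)) = 1 / (1 + h) := by
  set h₀ := 2 / (exp (2 * a) - 1)
  have hh₀ : 0 < h₀ := div_pos two_pos (sub_pos.2 (one_lt_exp_iff.2 (by positivity)))
  let g := fun h => tanh (a * (1 + h)) - 1 / (1 + h)
  have hg_cont : ContinuousOn g (Icc 0 h₀) := by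
    refine (continuous_tanh.comp (by fun_prop)).continuousOn.sub
      (continuousOn_const.div (by fun_prop) fun h hh => ?_)
    linarith [hh.1]
  have hg0 : g 0 < 0 := by simpa [g] using tanh_lt_one a
  have hgh₀ : 0 < g h₀ := by
    have hkey : tanh a = 1 / (1 + h₀) := tanh_eq_one_div_one_add ha.ne'
    have : tanh a < tanh (a * (1 + h₀)) := strictMono_tanh (by nlinarith)
    simp only [g]
    linarith
  obtain ⟨h, hh, hgh⟩ := intermediate_value_Ioo hh₀.le hg_cont ⟨hg0, hgh₀⟩
  exact ⟨h, hh, sub_eq_zero.1 hgh⟩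

/-- There is a unique `h > 0` with `tanh((u*Δ/(2ε))(1+h)) = 1/(1+h)`, and it
satisfies `h ≤ 2/(e^{u*Δ/ε} − 1)`. -/
theorem stmt7 (ε ustar Δ : ℝ) (hε : 0 < ε) (hu : 0 < ustar) (hΔ : 0 < Δ) :
    ∃ h : ℝ, (0 < h ∧ Real.tanh ((ustar * Δ / (2 * ε)) * (1 + h)) = 1 / (1 + h))
      ∧ (∀ h' : ℝ, 0 < h' →
          Real.tanh ((ustar * Δ / (2 * ε)) * (1 + h')) = 1 / (1 + h') → h' = h)
      ∧ h ≤ 2 / (Real.exp (ustar * Δ / ε) - 1) := by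
  set a := ustar * Δ / (2 * ε)
  have ha : 0 < a := by positivity
  have h2a : ustar * Δ / ε = 2 * a := by simp only [a]; field_simp
  obtain ⟨h, ⟨hpos, hbound⟩, hroot⟩ := exists_mem_Ioo_tanh_mul_one_add_eq_inv ha
  refine ⟨h, ⟨hpos, hroot⟩, fun h' hpos' hroot' => ?_, h2a ▸ hbound.le⟩
  refine (strictMonoOn_tanh_mul_one_add_sub_inv ha.le).injOn
    (by simp only [mem_Ioi]; linarith) (by simp only [mem_Ioi]; linarith) ?_
  simp only [hroot, hroot', sub_self]
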